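/- Let k be a real number with k > 1, and let a, b be nonzero complex numbers with |a| = |b|. Suppose d ∈ ℝ is such that (b − a)·exp(i k d) is a negative real number (i.e. d is a singular direction with a Stokes arrow from the exponent a z^k to the exponent b z^k). Then Re(a·exp(i k d)) > 0 and Re(b·exp(i k d)) < 0, and, letting I be the connected component of d in {θ ∈ ℝ | Re(a·exp(i k θ)) > 0} and J the connected component of d in {θ ∈ ℝ | Re(b·exp(i k θ)) < 0}, the direction d is the midpoint of the bounded open interval I ∩ J, i.e. d = (sInf(I ∩ J) + sSup(I ∩ J))/2. -/

import Mathlib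

/-! With `A = a e^{ikd}` and `B = b e^{ikd}`, the conditions `|A| = |B|` and `B - A < 0` force
`B = -conj A` and `Re A > 0`, so `α = arg A` lies in `(-π/2, π/2)` and
`Re(a e^{ikθ}) = |a| cos(k(θ - d) + α)`, `Re(b e^{ikθ}) = -|a| cos(k(θ - d) - α)`.
Hence `I = d + (-(π/2 + α), π/2 - α)/k` and `J = d + (-(π/2 - α), π/2 + α)/k`, which are
mirror images of each other in `d`, so `I ∩ J` is an interval centred at `d`. -/

open Complex Set

/-- The set of directions `θ` in which the exponential `exp(a z^k)` grows along the ray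
`z = r e^{iθ}`, i.e. where `Re(a · exp(i k θ)) > 0`. -/
def posDirections (a : ℂ) (k : ℝ) : Set ℝ :=
  {θ : ℝ | 0 < (a * Complex.exp (Complex.I * k * θ)).re}

/-- The set of directions `θ` in which the exponential `exp(a z^k)` decays along the ray
`z = r e^{iθ}`, i.e. where `Re(a · exp(i k θ)) < 0`. -/
def negDirections (a : ℂ) (k : ℝ) : Set ℝ :=
  {θ : ℝ | (a * Complex.exp (Complex.I * k * θ)).re < 0}

open scoped Real ComplexConjugate

lemma connectedComponentIn_setOf_pos_eq_Ioo {g : ℝ → ℝ} {e₁ e₂ d : ℝ} (h₁ : e₁ < d) (h₂ : d < e₂)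
    (hpos : ∀ θ ∈ Ioo e₁ e₂, 0 < g θ) (he₁ : g e₁ ≤ 0) (he₂ : g e₂ ≤ 0) :
    connectedComponentIn {θ | 0 < g θ} d = Ioo e₁ e₂ := by
  set C := connectedComponentIn {θ | 0 < g θ} d
  refine Subset.antisymm (fun θ hθ => ?_)
    (isPreconnected_Ioo.subset_connectedComponentIn ⟨h₁, h₂⟩ hpos)
  have hd : d ∈ C := mem_connectedComponentIn (hpos d ⟨h₁, h₂⟩)
  have hC : C ⊆ {θ | 0 < g θ} := connectedComponentIn_subset _ _
  have hord : C.OrdConnected := isPreconnected_connectedComponentIn.ordConnected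
  constructor
  · by_contra! h
    exact (hC (hord.out hθ hd ⟨h, h₁.le⟩)).not_ge he₁
  · by_contra! h
    exact (hC (hord.out hd hθ ⟨h₂.le, h⟩)).not_ge he₂

lemma connectedComponentIn_setOf_cos_pos {k β : ℝ} (hk : 0 < k) (hβ : |β| < π / 2) (d : ℝ) :
    connectedComponentIn {θ | 0 < Real.cos (k * (θ - d) + β)} d =
      Ioo (d - (π / 2 + β) / k) (d + (π / 2 - β) / k) := by
  obtain ⟨hβ₁, hβ₂⟩ := abs_lt.mp hβ
  apply connectedComponentIn_setOf_pos_eq_Ioo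
  · linarith [div_pos (by linarith : 0 < π / 2 + β) hk]
  · linarith [div_pos (by linarith : 0 < π / 2 - β) hk]
  · rintro θ ⟨hθ₁, hθ₂⟩
    refine Real.cos_pos_of_mem_Ioo ⟨?_, ?_⟩
    · linarith [(lt_div_iff₀ hk).mp (by linarith : d - θ < (π / 2 + β) / k)]
    · linarith [(lt_div_iff₀ hk).mp (by linarith : θ - d < (π / 2 - β) / k)]
  · have : k * (d - (π / 2 + β) / k - d) + β = -(π / 2) := by field_simp; ring
    rw [this, Real.cos_neg, Real.cos_pi_div_two]
  · have : k * (d + (π / 2 - β) / k - d) + β = π / 2 := by field_simp; ring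
    rw [this, Real.cos_pi_div_two]

lemma Ioo_inter_Ioo_sub_add (d u v : ℝ) :
    Ioo (d - u) (d + v) ∩ Ioo (d - v) (d + u) = Ioo (d - min u v) (d + min u v) := by
  rw [Ioo_inter_Ioo, max_sub_sub_left, min_add_add_left, min_comm v u]

lemma sInf_add_sSup_Ioo_sub_add {w : ℝ} (hw : 0 < w) (d : ℝ) :
    (sInf (Ioo (d - w) (d + w)) + sSup (Ioo (d - w) (d + w))) / 2 = d := by
  rw [csInf_Ioo (by linarith), csSup_Ioo (by linarith)]
  ring

lemma re_mul_exp_ofReal_mul_I (w : ℂ) (t : ℝ) :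
    (w * exp (t * I)).re = ‖w‖ * Real.cos (t + arg w) := by
  conv_lhs => rw [← norm_mul_exp_arg_mul_I w, mul_assoc, ← Complex.exp_add]
  rw [← add_mul, ← ofReal_add, re_ofReal_mul, exp_ofReal_mul_I_re, add_comm]

lemma re_mul_exp_I_mul (a : ℂ) (k d θ : ℝ) :
    (a * exp (I * k * θ)).re = ‖a‖ * Real.cos (k * (θ - d) + arg (a * exp (I * k * d))) := by
  have : a * exp (I * k * θ) = a * exp (I * k * d) * exp ((k * (θ - d) : ℝ) * I) := by
    rw [mul_assoc a, ← Complex.exp_add]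
    congr 2
    push_cast
    ring
  rw [this, re_mul_exp_ofReal_mul_I, norm_mul, mul_assoc I, ← ofReal_mul,
    norm_exp_I_mul_ofReal, mul_one]

lemma posDirections_eq_setOf_cos_pos {a : ℂ} (ha : a ≠ 0) (k d : ℝ) :
    posDirections a k = {θ | 0 < Real.cos (k * (θ - d) + arg (a * exp (I * k * d)))} := by
  ext θ
  rw [posDirections, mem_ofPred, mem_ofPred, re_mul_exp_I_mul a k d θ,
    mul_pos_iff_of_pos_left (norm_pos_iff.mpr ha)]

lemma negDirections_eq_posDirections_neg (b : ℂ) (k : ℝ) :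
    negDirections b k = posDirections (-b) k := by
  ext θ
  simp [negDirections, posDirections]

lemma re_eq_neg_half_of_norm_eq_of_sub_eq_ofReal {A B : ℂ} {r : ℝ} (hAB : ‖A‖ = ‖B‖) (hr : r ≠ 0)
    (h : B - A = r) : A.re = -r / 2 := by
  have hB : B = A + r := by rw [← h]; ring
  have hsq : B.re ^ 2 = A.re ^ 2 := by
    rw [← Complex.sq_norm_sub_sq_im B, ← Complex.sq_norm_sub_sq_im A, ← hAB, hB]
    simp
  rw [hB, add_re, ofReal_re] at hsq
  have := (mul_eq_zero.mp (by linarith : r * (2 * A.re + r) = 0)).resolve_left hr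
  linarith

lemma neg_eq_conj_of_norm_eq_of_sub_eq_ofReal {A B : ℂ} {r : ℝ} (hAB : ‖A‖ = ‖B‖) (hr : r ≠ 0)
    (h : B - A = r) : -B = conj A := by
  have hre := re_eq_neg_half_of_norm_eq_of_sub_eq_ofReal hAB hr h
  have hB : B = A + r := by rw [← h]; ring
  apply Complex.ext
  · simp only [hB, neg_re, add_re, ofReal_re, conj_re]
    linarith
  · simp only [hB, neg_im, add_im, ofReal_im, add_zero, conj_im]

theorem singular_direction_is_midpoint_general
    (k : ℝ) (hk : 1 < k) (a b : ℂ)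
    (hab : ‖a‖ = ‖b‖) (d : ℝ)
    (hd : ∃ r : ℝ, r < 0 ∧ (b - a) * Complex.exp (Complex.I * k * d) = r) :
    0 < (a * Complex.exp (Complex.I * k * d)).re ∧
    (b * Complex.exp (Complex.I * k * d)).re < 0 ∧
    d = (sInf (connectedComponentIn (posDirections a k) d ∩
              connectedComponentIn (negDirections b k) d) +
         sSup (connectedComponentIn (posDirections a k) d ∩
              connectedComponentIn (negDirections b k) d)) / 2 := by
  obtain ⟨r, hr, hrd⟩ := hd
  set A := a * exp (I * k * d)
  have hnorm : ‖A‖ = ‖b * exp (I * k * d)‖ := by simp only [A, norm_mul, hab]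
  have hsub : b * exp (I * k * d) - A = r := by rw [← sub_mul, hrd]
  have hconj := neg_eq_conj_of_norm_eq_of_sub_eq_ofReal hnorm hr.ne hsub
  have hA : 0 < A.re := by
    rw [re_eq_neg_half_of_norm_eq_of_sub_eq_ofReal hnorm hr.ne hsub]; linarith
  have hα : |arg A| < π / 2 := abs_arg_lt_pi_div_two_iff.mpr (Or.inl hA)
  obtain ⟨hα₁, hα₂⟩ := abs_lt.mp hα
  have hk₀ : 0 < k := by linarith
  have hI : connectedComponentIn (posDirections a k) d =
      Ioo (d - (π / 2 + arg A) / k) (d + (π / 2 - arg A) / k) := by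
    rw [posDirections_eq_setOf_cos_pos (left_ne_zero_of_mul (ne_zero_of_re_pos hA)) k d]
    exact connectedComponentIn_setOf_cos_pos hk₀ hα d
  have hJ : connectedComponentIn (negDirections b k) d =
      Ioo (d - (π / 2 - arg A) / k) (d + (π / 2 + arg A) / k) := by
    have hb : -b ≠ 0 := left_ne_zero_of_mul (by rw [neg_mul, hconj]; exact ne_zero_of_re_pos hA)
    have harg : arg (conj A) = -arg A := by
      rw [arg_conj, if_neg (by linarith [Real.pi_pos])]
    rw [negDirections_eq_posDirections_neg, posDirections_eq_setOf_cos_pos hb k d, neg_mul, hconj,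
      harg, connectedComponentIn_setOf_cos_pos hk₀ (by rwa [abs_neg]) d, sub_neg_eq_add,
      ← sub_eq_add_neg]
  refine ⟨hA, neg_pos.mp (by rwa [← neg_re, hconj, conj_re]), ?_⟩
  rw [hI, hJ, Ioo_inter_Ioo_sub_add, sInf_add_sSup_Ioo_sub_add]
  exact lt_min (div_pos (by linarith) hk₀) (div_pos (by linarith) hk₀)

/-- if `d` is a singular direction with a Stokes arrow from the exponent `a z^k`
to the exponent `b z^k` (with `|a| = |b|`, `k > 1`), i.e. `(b - a)·exp(i k d)` is a negative real
number, then `Re(a·exp(i k d)) > 0`, `Re(b·exp(i k d)) < 0`, and `d` is the midpoint of the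
intersection `I ∩ J` of the connected component `I` of `d` in the positive directions of `a z^k`
with the connected component `J` of `d` in the negative directions of `b z^k`. -/
theorem singular_direction_is_midpoint
    (k : ℝ) (hk : 1 < k) (a b : ℂ) (ha : a ≠ 0) (hb : b ≠ 0)
    (hab : ‖a‖ = ‖b‖) (d : ℝ)
    (hd : ∃ r : ℝ, r < 0 ∧ (b - a) * Complex.exp (Complex.I * k * d) = r) :
    0 < (a * Complex.exp (Complex.I * k * d)).re ∧
    (b * Complex.exp (Complex.I * k * d)).re < 0 ∧
    d = (sInf (connectedComponentIn (posDirections a k) d ∩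
              connectedComponentIn (negDirections b k) d) +
         sSup (connectedComponentIn (posDirections a k) d ∩
              connectedComponentIn (negDirections b k) d)) / 2 :=
  singular_direction_is_midpoint_general k hk a b hab d hd
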